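/- arXiv:2603.26580 — 5 statements merged into one kernel-verified Lean document; each statement's English description precedes it below -/
import Mathlib

section
/- If R is a stably finite ring, then the stable rank ρ*(A) of any matrix A over R is well-defined (the limit defining it exists), is non-negative, and is strictly positive whenever A is a non-zero matrix. -/
/-- The inner rank of a matrix `A` over a ring `R`: the least `k` such that `A = B * C`
with `B` of size `m × k` and `C` of size `k × n`. -/
noncomputable def innerRank {R : Type*} [Ring R] {m n : Type*} [Fintype m] [Fintype n]
    (A : Matrix m n R) : ℕ :=
  sInf {k : ℕ | ∃ (B : Matrix m (Fin k) R) (C : Matrix (Fin k) n R), A = B * C}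

/-- The block diagonal matrix `A ⊕ I_s`. -/
def blockDiagId {R : Type*} [Ring R] {m n : Type*} (A : Matrix m n R) (s : ℕ) :
    Matrix (m ⊕ Fin s) (n ⊕ Fin s) R :=
  Matrix.fromBlocks A 0 0 1

/-- A ring is stably finite if one-sided inverses of square matrices are two-sided. -/
def StablyFinite (R : Type*) [Ring R] : Prop :=
  ∀ (k : ℕ) (A B : Matrix (Fin k) (Fin k) R), A * B = 1 → B * A = 1

section Aux

open Matrix

variable {R : Type*} [Ring R]

lemma innerRank_le_of_factor {m n : Type*} [Fintype m] [Fintype n] {A : Matrix m n R} {k : ℕ}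
    (B : Matrix m (Fin k) R) (C : Matrix (Fin k) n R) (h : A = B * C) : innerRank A ≤ k :=
  Nat.sInf_le ⟨B, C, h⟩

lemma factorSet_nonempty {m n : Type*} [Fintype m] [Fintype n] (A : Matrix m n R) :
    {k : ℕ | ∃ (B : Matrix m (Fin k) R) (C : Matrix (Fin k) n R), A = B * C}.Nonempty := by
  classical
  refine ⟨Fintype.card n, A.submatrix id ⇑(Fintype.equivFin n).symm,
    (1 : Matrix n n R).submatrix (⇑(Fintype.equivFin n).symm) id, ?_⟩
  rw [Matrix.submatrix_mul_equiv, Matrix.mul_one, Matrix.submatrix_id_id]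

lemma exists_factor {m n : Type*} [Fintype m] [Fintype n] (A : Matrix m n R) :
    ∃ (B : Matrix m (Fin (innerRank A)) R) (C : Matrix (Fin (innerRank A)) n R), A = B * C :=
  Nat.sInf_mem (factorSet_nonempty A)

/-- Padding a factorization with zero columns/rows. -/
lemma pad_factor {m n : Type*} [Fintype m] [Fintype n] {A : Matrix m n R} {k k' : ℕ}
    (hk : k ≤ k') (B : Matrix m (Fin k) R) (C : Matrix (Fin k) n R) (h : A = B * C) :
    ∃ (B' : Matrix m (Fin k') R) (C' : Matrix (Fin k') n R),
      A = B' * C' ∧ ∀ t : Fin k', k ≤ (t : ℕ) → ∀ j, C' t j = 0 := by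
  classical
  set e : Fin k ⊕ Fin (k' - k) ≃ Fin k' :=
    finSumFinEquiv.trans (finCongr (Nat.add_sub_cancel' hk)) with he
  refine ⟨(Matrix.fromCols B 0).submatrix id ⇑e.symm,
    (Matrix.fromRows C 0).submatrix (⇑e.symm) id, ?_, ?_⟩
  · rw [Matrix.submatrix_mul_equiv, Matrix.fromCols_mul_fromRows, Matrix.zero_mul,
      add_zero, Matrix.submatrix_id_id, h]
  · intro t ht j
    rcases h' : e.symm t with a | b
    · exfalso
      have : t = e (Sum.inl a) := by rw [← h', Equiv.apply_symm_apply]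
      have hv : (t : ℕ) = (a : ℕ) := by
        rw [this, he]
        simp [finSumFinEquiv_apply_left]
      omega
    · simp [Matrix.submatrix_apply, h']

lemma innerRank_submatrix_le {m n m' n' : Type*} [Fintype m] [Fintype n] [Fintype m'] [Fintype n']
    (M : Matrix m n R) (e : m' → m) (f : n' → n) :
    innerRank (M.submatrix e f) ≤ innerRank M := by
  obtain ⟨B, C, h⟩ := exists_factor M
  refine innerRank_le_of_factor (B.submatrix e id) (C.submatrix id f) ?_
  ext i j
  rw [Matrix.submatrix_apply, congrFun (congrFun h (e i)) (f j)]
  simp [Matrix.mul_apply]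

lemma innerRank_fromBlocks_le {m n p q : Type*} [Fintype m] [Fintype n] [Fintype p] [Fintype q]
    (A : Matrix m n R) (D : Matrix p q R) :
    innerRank (Matrix.fromBlocks A 0 0 D) ≤ innerRank A + innerRank D := by
  obtain ⟨B₁, C₁, h₁⟩ := exists_factor A
  obtain ⟨B₂, C₂, h₂⟩ := exists_factor D
  refine innerRank_le_of_factor
    ((Matrix.fromBlocks B₁ 0 0 B₂).submatrix id ⇑finSumFinEquiv.symm)
    ((Matrix.fromBlocks C₁ 0 0 C₂).submatrix (⇑finSumFinEquiv.symm) id) ?_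
  rw [Matrix.submatrix_mul_equiv, Matrix.fromBlocks_multiply]
  simp [h₁, h₂]

lemma innerRank_step {m n : ℕ} (A : Matrix (Fin m) (Fin n) R) (s : ℕ) :
    innerRank (blockDiagId A (s + 1)) ≤ innerRank (blockDiagId A s) + 1 := by
  classical
  set eR : Fin m ⊕ Fin (s + 1) → (Fin m ⊕ Fin s) ⊕ Fin 1 :=
    Sum.elim (fun i => Sum.inl (Sum.inl i))
      (fun j => if h : (j : ℕ) < s then Sum.inl (Sum.inr ⟨j, h⟩) else Sum.inr 0) with heR
  set eC : Fin n ⊕ Fin (s + 1) → (Fin n ⊕ Fin s) ⊕ Fin 1 :=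
    Sum.elim (fun i => Sum.inl (Sum.inl i))
      (fun j => if h : (j : ℕ) < s then Sum.inl (Sum.inr ⟨j, h⟩) else Sum.inr 0) with heC
  have key : blockDiagId A (s + 1) =
      (Matrix.fromBlocks (blockDiagId A s) 0 0 (1 : Matrix (Fin 1) (Fin 1) R)).submatrix eR eC := by
    ext i j
    rcases i with i | i <;> rcases j with j | j
    · simp [blockDiagId, heR, heC]
    · simp only [blockDiagId, heR, heC, Matrix.submatrix_apply, Sum.elim_inl, Sum.elim_inr]
      split_ifs <;> simp
    · simp only [blockDiagId, heR, heC, Matrix.submatrix_apply, Sum.elim_inl, Sum.elim_inr]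
      split_ifs <;> simp
    · simp only [blockDiagId, heR, heC, Matrix.submatrix_apply, Sum.elim_inr]
      split_ifs with h1 h2 h2
      · simp [Matrix.fromBlocks_apply₁₁, blockDiagId, Matrix.one_apply, Fin.ext_iff]
      · have : (i : ℕ) ≠ (j : ℕ) := by omega
        simp [Matrix.one_apply, Fin.ext_iff, this]
      · have : (i : ℕ) ≠ (j : ℕ) := by omega
        simp [Matrix.one_apply, Fin.ext_iff, this]
      · have hi : (i : ℕ) = s := by omega
        have hj : (j : ℕ) = s := by omega
        have : i = j := by rw [Fin.ext_iff, hi, hj]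
        simp [Matrix.one_apply, this]
  calc innerRank (blockDiagId A (s + 1))
      ≤ innerRank (Matrix.fromBlocks (blockDiagId A s) 0 0 (1 : Matrix (Fin 1) (Fin 1) R)) := by
        rw [key]; exact innerRank_submatrix_le _ _ _
    _ ≤ innerRank (blockDiagId A s) + innerRank (1 : Matrix (Fin 1) (Fin 1) R) :=
        innerRank_fromBlocks_le _ _
    _ ≤ innerRank (blockDiagId A s) + 1 := by
        have : innerRank (1 : Matrix (Fin 1) (Fin 1) R) ≤ 1 :=
          innerRank_le_of_factor 1 1 (by simp)
        omega

lemma submatrix_mul_submatrix {m n p m' p' : Type*} [Fintype n] [Fintype m] [Fintype p]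
    (B : Matrix m n R) (C : Matrix n p R) (e : m' → m) (f : p' → p) :
    (B.submatrix e id) * (C.submatrix id f) = (B * C).submatrix e f := by
  ext i j
  simp [Matrix.mul_apply]

/-- Unconditional lower bound: `ρ(A ⊕ I_s) ≥ s`. -/
lemma innerRank_lb [Nontrivial R] (hR : StablyFinite R) {m n : ℕ}
    (A : Matrix (Fin m) (Fin n) R) (s : ℕ) :
    s ≤ innerRank (blockDiagId A s) := by
  by_contra hlt
  push_neg at hlt
  obtain ⟨B, C, h⟩ := exists_factor (blockDiagId A s)
  -- Extract the identity block factorization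
  have hBC : (B.submatrix Sum.inr id) * (C.submatrix id Sum.inr) = (1 : Matrix (Fin s) (Fin s) R) := by
    rw [submatrix_mul_submatrix, ← h]
    ext i j
    simp [blockDiagId, Matrix.one_apply]
  obtain ⟨B', C', hBC', hzero⟩ := pad_factor (le_of_lt hlt) _ _ hBC.symm
  have h1 : C' * B' = 1 := hR s B' C' hBC'.symm
  have hs : 0 < s := by omega
  set t : Fin s := ⟨s - 1, by omega⟩ with ht
  have htv : (t : ℕ) = s - 1 := rfl
  have h2 : (C' * B') t t = 0 := by
    rw [Matrix.mul_apply]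
    apply Finset.sum_eq_zero
    intro u _
    rw [hzero t (by rw [htv]; omega) u, zero_mul]
  rw [h1] at h2
  simp [Matrix.one_apply] at h2

/-- Lower bound for nonzero `A`: `ρ(A ⊕ I_s) ≥ s + 1`. -/
lemma innerRank_lb' [Nontrivial R] (hR : StablyFinite R) {m n : ℕ}
    {A : Matrix (Fin m) (Fin n) R} (hA : A ≠ 0) (s : ℕ) :
    s + 1 ≤ innerRank (blockDiagId A s) := by
  by_contra hlt
  push_neg at hlt
  have hle : innerRank (blockDiagId A s) ≤ s := by omega
  obtain ⟨B₀, C₀, h₀⟩ := exists_factor (blockDiagId A s)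
  obtain ⟨B, C, h, -⟩ := pad_factor hle B₀ C₀ h₀
  have hBC : (B.submatrix Sum.inr id) * (C.submatrix id Sum.inr) = (1 : Matrix (Fin s) (Fin s) R) := by
    rw [submatrix_mul_submatrix, ← h]
    ext i j
    simp [blockDiagId, Matrix.one_apply]
  have h1 : (C.submatrix id Sum.inr) * (B.submatrix Sum.inr id) = 1 := hR s _ _ hBC
  have h0 : (B.submatrix Sum.inl id) * (C.submatrix id Sum.inr) = 0 := by
    rw [submatrix_mul_submatrix, ← h]
    ext i j
    simp [blockDiagId]
  have hB1 : (B.submatrix Sum.inl id : Matrix (Fin m) (Fin s) R) = 0 := by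
    calc (B.submatrix Sum.inl id : Matrix (Fin m) (Fin s) R)
        = (B.submatrix Sum.inl id) * ((C.submatrix id Sum.inr) * (B.submatrix Sum.inr id)) := by
          rw [h1, Matrix.mul_one]
      _ = ((B.submatrix Sum.inl id) * (C.submatrix id Sum.inr)) * (B.submatrix Sum.inr id) := by
          rw [Matrix.mul_assoc]
      _ = 0 := by rw [h0, Matrix.zero_mul]
  apply hA
  have hA' : A = (B.submatrix Sum.inl id) * (C.submatrix id Sum.inl) := by
    rw [submatrix_mul_submatrix, ← h]
    ext i j
    simp [blockDiagId]
  rw [hA', hB1, Matrix.zero_mul]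

end Aux

/-- Over a (nonzero) stably finite ring, the stable rank
`ρ*(A) = lim_{s → ∞} (ρ(A ⊕ I_s) - s)` of any matrix `A` is well defined (the limit exists),
is non-negative, and is positive whenever `A ≠ 0`. -/
theorem stmt0 {R : Type*} [Ring R] [Nontrivial R] (hR : StablyFinite R)
    {m n : ℕ} (A : Matrix (Fin m) (Fin n) R) :
    ∃ r : ℤ,
      Filter.Tendsto (fun s : ℕ => (innerRank (blockDiagId A s) : ℤ) - (s : ℤ))
        Filter.atTop (nhds r) ∧
      0 ≤ r ∧ (A ≠ 0 → 0 < r) := by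
  set g : ℕ → ℤ := fun s => (innerRank (blockDiagId A s) : ℤ) - (s : ℤ) with hg
  have hanti : Antitone g := by
    apply antitone_nat_of_succ_le
    intro s
    have := innerRank_step A s
    simp only [hg]
    push_cast
    omega
  have hlb : ∀ s, 0 ≤ g s := by
    intro s
    have := innerRank_lb hR A s
    simp only [hg]
    omega
  have hbdd : BddBelow (Set.range g) := by
    refine ⟨0, ?_⟩
    rintro x ⟨s, rfl⟩
    exact hlb s
  refine ⟨⨅ s, g s, tendsto_atTop_ciInf hanti hbdd, le_ciInf hlb, ?_⟩
  intro hA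
  have : (1 : ℤ) ≤ ⨅ s, g s := by
    apply le_ciInf
    intro s
    have := innerRank_lb' hR hA s
    simp only [hg]
    omega
  omega
end

section
/- Let R be a ring, let D and E be division rings equipped with ring homomorphisms from R, and let φ : R^n → R^m be an R-linear map between finitely generated free R-modules. If the scalar-extended map E ⊗_R φ : E ⊗_R R^n → E ⊗_R R^m is injective and dim_D(D ⊗_R L) ≤ dim_E(E ⊗_R L) holds for every finitely presented R-module L, then D ⊗_R φ is also injective. -/
/-- The extension of scalars, along a ring homomorphism `f : R → D` into a division ring, of the
`R`-linear map `R^n → R^m` given by right multiplication by the matrix `A`; under the canonical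
identification `D ⊗_R R^k ≅ D^k` it is the `D`-linear map `v ↦ v ⬝ f(A)`. -/
def extMap {R D : Type*} [Ring R] [DivisionRing D] (f : R →+* D)
    {n m : ℕ} (A : Matrix (Fin n) (Fin m) R) : (Fin n → D) →ₗ[D] (Fin m → D) where
  toFun v := Matrix.vecMul v (A.map f)
  map_add' x y := by
    ext j
    simp [Matrix.vecMul, dotProduct, add_mul, Finset.sum_add_distrib]
  map_smul' d v := by
    ext j
    simp [Matrix.vecMul, dotProduct, Finset.mul_sum, mul_assoc]

/-- `dim_D (D ⊗_R L)` for the finitely presented `R`-module `L` presented as the cokernel of the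
matrix `A`: it is the `D`-dimension of the cokernel of the extended map. -/
noncomputable def extDim {R D : Type*} [Ring R] [DivisionRing D] (f : R →+* D)
    {n m : ℕ} (A : Matrix (Fin n) (Fin m) R) : Cardinal :=
  Module.rank D ((Fin m → D) ⧸ LinearMap.range (extMap f A))

/-! Over a division ring, `dim coker φ ≥ dim W - dim V` for `φ : V → W`, with equality exactly
when `φ` is injective. So if `E ⊗ φ` is injective, the hypothesis forces the cokernel of `D ⊗ φ`
to be as small as possible, and `D ⊗ φ` is injective as well. -/

theorem LinearMap.injective_iff_finrank_quotient_range_add_le {K V W : Type*} [DivisionRing K]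
    [AddCommGroup V] [Module K V] [FiniteDimensional K V]
    [AddCommGroup W] [Module K W] [FiniteDimensional K W] (φ : V →ₗ[K] W) :
    Function.Injective φ ↔
      Module.finrank K (W ⧸ LinearMap.range φ) + Module.finrank K V ≤ Module.finrank K W := by
  have hcoker := Submodule.finrank_quotient_add_finrank (LinearMap.range φ)
  have hrank := LinearMap.finrank_range_add_finrank_ker φ
  rw [← LinearMap.ker_eq_bot, ← Submodule.finrank_eq_zero]
  omega

theorem extDim_eq_finrank {R D : Type*} [Ring R] [DivisionRing D] (f : R →+* D)
    {n m : ℕ} (A : Matrix (Fin n) (Fin m) R) :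
    extDim f A = Module.finrank D ((Fin m → D) ⧸ LinearMap.range (extMap f A)) :=
  (Module.finrank_eq_rank D _).symm

theorem extMap_injective_iff {R D : Type*} [Ring R] [DivisionRing D] (f : R →+* D)
    {n m : ℕ} (A : Matrix (Fin n) (Fin m) R) :
    Function.Injective (extMap f A) ↔ extDim f A + n ≤ m := by
  rw [LinearMap.injective_iff_finrank_quotient_range_add_le, extDim_eq_finrank,
    Module.finrank_fin_fun, Module.finrank_fin_fun]
  norm_cast

/-- Let `D`, `E` be division `R`-rings and `φ : R^n → R^m` an `R`-linear map (given by a matrix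
`A`).  If `dim_D (D ⊗_R L) ≤ dim_E (E ⊗_R L)` for every finitely presented `R`-module `L`
(equivalently, for every cokernel of a matrix over `R`) and `E ⊗_R φ` is injective, then
`D ⊗_R φ` is injective. -/
theorem stmt1 {R : Type*} {D E : Type u} [Ring R] [DivisionRing D] [DivisionRing E]
    (fD : R →+* D) (fE : R →+* E) {n m : ℕ} (A : Matrix (Fin n) (Fin m) R)
    (hdim : ∀ (a b : ℕ) (B : Matrix (Fin a) (Fin b) R), extDim fD B ≤ extDim fE B)
    (hE : Function.Injective (extMap fE A)) :
    Function.Injective (extMap fD A) := by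
  rw [extMap_injective_iff] at hE ⊢
  exact (add_le_add_left (hdim n m A) _).trans hE
end

section
/- Let R be a ring and let L be a finitely presented R-module that is flat. Then L is projective. -/
/-- Flatness of a left module over an arbitrary (possibly noncommutative) ring, via the
equational criterion: every linear relation `∑ rᵢ • mᵢ = 0` comes from relations in the ring. -/
def IsRFlat (R M : Type*) [Ring R] [AddCommGroup M] [Module R M] : Prop :=
  ∀ (n : ℕ) (r : Fin n → R) (m : Fin n → M), (∑ i, r i • m i) = 0 →
    ∃ (p : ℕ) (a : Fin n → Fin p → R) (y : Fin p → M),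
      (∀ i, m i = ∑ j, a i j • y j) ∧ ∀ j, (∑ i, r i * a i j) = 0

/-- The equational criterion for a finite system of relations, by induction on the number
of relations. -/
lemma IsRFlat.multi {R L : Type*} [Ring R] [AddCommGroup L] [Module R L]
    (hflat : IsRFlat R L) :
    ∀ (q n : ℕ) (r : Fin q → Fin n → R) (m : Fin n → L),
      (∀ t, (∑ i, r t i • m i) = 0) →
      ∃ (p : ℕ) (a : Fin n → Fin p → R) (y : Fin p → L),
        (∀ i, m i = ∑ j, a i j • y j) ∧ ∀ t j, (∑ i, r t i * a i j) = 0 := by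
  intro q
  induction q with
  | zero =>
    intro n r m _
    classical
    refine ⟨n, fun i j => if i = j then 1 else 0, m, fun i => ?_, fun t => t.elim0⟩
    simp [ite_smul]
  | succ q ih =>
    intro n r m hr
    obtain ⟨p₁, a, y, ha, ha0⟩ := hflat n (r 0) m (hr 0)
    have hy : ∀ t : Fin q, (∑ j, (∑ i, r t.succ i * a i j) • y j) = 0 := by
      intro t
      have : (∑ j, (∑ i, r t.succ i * a i j) • y j) = ∑ i, r t.succ i • m i := by
        simp_rw [Finset.sum_smul, mul_smul]
        rw [Finset.sum_comm]
        simp_rw [← Finset.smul_sum]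
        exact Finset.sum_congr rfl fun i _ => by rw [← ha]
      rw [this]
      exact hr t.succ
    obtain ⟨p, b, z, hb, hb0⟩ := ih p₁ (fun t j => ∑ i, r t.succ i * a i j) y hy
    refine ⟨p, fun i k => ∑ j, a i j * b j k, z, fun i => ?_, fun t => ?_⟩
    · rw [ha i]
      simp_rw [Finset.sum_smul, mul_smul]
      rw [Finset.sum_comm]
      exact Finset.sum_congr rfl fun j _ => by rw [← Finset.smul_sum, ← hb]
    · refine Fin.cases ?_ ?_ t
      · intro k
        have : (∑ i, r 0 i * ∑ j, a i j * b j k)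
            = ∑ j, (∑ i, r 0 i * a i j) * b j k := by
          simp_rw [Finset.mul_sum, Finset.sum_mul, ← mul_assoc]
          rw [Finset.sum_comm]
        rw [this]
        simp [ha0]
      · intro t' k
        have : (∑ i, r t'.succ i * ∑ j, a i j * b j k)
            = ∑ j, (∑ i, r t'.succ i * a i j) * b j k := by
          simp_rw [Finset.mul_sum, Finset.sum_mul, ← mul_assoc]
          rw [Finset.sum_comm]
        rw [this]
        exact hb0 t' k

/-- A finitely presented flat module over any ring is projective. -/
theorem stmt8 {R L : Type*} [Ring R] [AddCommGroup L] [Module R L]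
    [Module.FinitePresentation R L] (hflat : IsRFlat R L) :
    Module.Projective R L := by
  classical
  obtain ⟨n, f, hf⟩ := Module.Finite.exists_fin' R L
  have hker := Module.FinitePresentation.fg_ker f hf
  obtain ⟨q, g, hg⟩ := Submodule.fg_iff_exists_fin_generating_family.mp hker
  set m : Fin n → L := fun i => f (Pi.single i 1) with hm
  have hfx : ∀ x : Fin n → R, f x = ∑ i, x i • m i := by
    intro x
    conv_lhs => rw [pi_eq_sum_univ x]
    rw [map_sum]
    refine Finset.sum_congr rfl fun i _ => ?_
    simp only [map_smul, hm]
    have hone : (fun j => if i = j then (1:R) else 0) = Pi.single i 1 := by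
      funext j; simp [Pi.single_apply, eq_comm]
    rw [hone]
  have hrel : ∀ t, (∑ i, g t i • m i) = 0 := by
    intro t
    rw [← hfx]
    have : g t ∈ LinearMap.ker f := by
      rw [← hg]
      exact Submodule.subset_span ⟨t, rfl⟩
    exact this
  obtain ⟨p, c, z, hc, hc0⟩ := hflat.multi q n g m hrel
  let A : (Fin n → R) →ₗ[R] (Fin p → R) :=
    { toFun := fun x k => ∑ i, x i * c i k
      map_add' := by
        intro x y
        funext k
        simp [add_mul, Finset.sum_add_distrib]
      map_smul' := by
        intro r x
        funext k
        simp [Finset.mul_sum, mul_assoc] }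
  let G : (Fin p → R) →ₗ[R] L :=
    { toFun := fun w => ∑ k, w k • z k
      map_add' := by
        intro w v
        simp [add_smul, Finset.sum_add_distrib]
      map_smul' := by
        intro r w
        simp [Finset.smul_sum, mul_smul] }
  have hGA : ∀ x, G (A x) = f x := by
    intro x
    show (∑ k, (∑ i, x i * c i k) • z k) = f x
    rw [hfx]
    simp_rw [Finset.sum_smul, mul_smul]
    rw [Finset.sum_comm]
    simp_rw [← Finset.smul_sum]
    exact Finset.sum_congr rfl fun i _ => by rw [← hc]
  have hkerA : LinearMap.ker f ≤ LinearMap.ker A := by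
    rw [← hg, Submodule.span_le]
    rintro _ ⟨t, rfl⟩
    have : A (g t) = 0 := by
      funext k
      show (∑ i, g t i * c i k) = 0
      exact hc0 t k
    exact this
  let e := f.quotKerEquivOfSurjective hf
  let B : L →ₗ[R] (Fin p → R) :=
    ((LinearMap.ker f).liftQ A hkerA).comp (e.symm : L →ₗ[R] _)
  have hB : ∀ x : Fin n → R, B (f x) = A x := by
    intro x
    have he : e ((LinearMap.ker f).mkQ x) = f x := rfl
    have : e.symm (f x) = (LinearMap.ker f).mkQ x := by
      rw [← he, LinearEquiv.symm_apply_apply]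
    show ((LinearMap.ker f).liftQ A hkerA) (e.symm (f x)) = A x
    rw [this]
    rfl
  have hsplit : G.comp B = LinearMap.id := by
    apply LinearMap.ext
    intro l
    obtain ⟨x, rfl⟩ := hf l
    show G (B (f x)) = f x
    rw [hB, hGA]
  exact Module.Projective.of_split B G hsplit
end

section
/- Let R ⊆ S be rings with S a finitely generated free left R-module via a crossed-product decomposition S = R * Q for a finite group Q of order d (so S ≅ R^d as left R-modules). If every finitely generated R-submodule of every finite free R-module is finitely presented over R, then every finitely generated S-submodule L of a finite free S-module is finitely presented over S. -/
/-!
Restricting scalars along `R → S`, a finitely generated `S`-submodule `L` of `Sⁿ` is a finitely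
generated `R`-submodule of the finite free `R`-module `Sⁿ`, hence finitely presented over `R`.
For an `S`-linear surjection `Sᵏ → L` the kernel is then finitely generated over `R`, since `Sᵏ`
is a finite `R`-module, and a fortiori over `S`.
-/

open Module

theorem Module.FinitePresentation.of_restrictScalars (R A M : Type*) [Ring R] [Ring A]
    [Module R A] [IsScalarTower R A A] [Module.Finite R A] [AddCommGroup M] [Module R M]
    [Module A M] [IsScalarTower R A M] [FinitePresentation R M] : FinitePresentation A M := by
  have : Module.Finite A M := .of_restrictScalars_finite R A M
  obtain ⟨k, f, hf⟩ := Module.Finite.exists_fin' A M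
  have hker : (LinearMap.ker (f.restrictScalars R)).FG := FinitePresentation.fg_ker _ hf
  exact finitePresentation_of_surjective f hf (.of_restrictScalars R hker)

section

variable {R : Type*} [Ring R]

theorem Submodule.finitePresentation_of_fg_of_basis {F ι : Type*} [AddCommGroup F] [Module R F]
    [Finite ι] (bF : Basis ι R F)
    (hR : ∀ (n : ℕ) (N : Submodule R (Fin n → R)), N.FG → FinitePresentation R N)
    (N : Submodule R F) (hN : N.FG) : FinitePresentation R N := by
  let e : F ≃ₗ[R] (Fin (Nat.card ι) → R) := (bF.reindex (Finite.equivFin ι)).equivFun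
  have := hR _ _ (hN.map e.toLinearMap)
  exact .of_equiv (e.submoduleMap N).symm

theorem Submodule.finitePresentation_of_fg_of_basis_restrictScalars {S ι : Type*} [Ring S]
    [Module R S] [IsScalarTower R S S] [Finite ι] (bS : Basis ι R S)
    (hR : ∀ (n : ℕ) (N : Submodule R (Fin n → R)), N.FG → FinitePresentation R N)
    (n : ℕ) (L : Submodule S (Fin n → S)) (hL : L.FG) : FinitePresentation S L := by
  have : Module.Finite R S := .of_basis bS
  have : FinitePresentation R L :=
    finitePresentation_of_fg_of_basis (Pi.basis fun _ : Fin n => bS) hR _ hL.restrictScalars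
  exact .of_restrictScalars R S L

end

theorem stmt9_general {R S : Type*} [Ring R] [Ring S] (ρ : R →+* S)
    {Q : Type*} [Fintype Q]
    (b : Q → S)
    (hbasis : ∀ x : S, ∃! c : Q → R, x = ∑ q, ρ (c q) * b q)
    (hR : ∀ (n : ℕ) (N : Submodule R (Fin n → R)), N.FG → Module.FinitePresentation R ↥N) :
    ∀ (n : ℕ) (L : Submodule S (Fin n → S)), L.FG → Module.FinitePresentation S ↥L := by
  let : Module R S := ρ.toModule
  have : IsScalarTower R S S := ⟨fun r s t => mul_assoc (ρ r) s t⟩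
  have hb : Function.Bijective (Fintype.linearCombination R b) :=
    (Function.bijective_iff_existsUnique _).mpr fun x => by
      simp only [Fintype.linearCombination_apply, eq_comm (b := x)]
      exact hbasis x
  exact Submodule.finitePresentation_of_fg_of_basis_restrictScalars
    (.ofEquivFun (LinearEquiv.ofBijective _ hb).symm) hR

/-- Let `R ⊆ S` be rings with `S = R * Q` a crossed product of `R` and a finite group `Q` of
order `d`; in particular `S` is free of rank `d` as a left `R`-module, on a basis of units
`(b_q)_{q ∈ Q}` compatible with the grading.  If every finitely generated `R`-submodule of a
finite free `R`-module is finitely presented over `R`, then every finitely generated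
`S`-submodule of a finite free `S`-module is finitely presented over `S`. -/
theorem stmt9 {R S : Type*} [Ring R] [Ring S] (ρ : R →+* S)
    (hinj : Function.Injective ρ)
    {Q : Type*} [Group Q] [Fintype Q] (d : ℕ) (hd : Fintype.card Q = d)
    (b : Q → S) (hunit : ∀ q, IsUnit (b q))
    (hbasis : ∀ x : S, ∃! c : Q → R, x = ∑ q, ρ (c q) * b q)
    (hcross₁ : ∀ q q' : Q, ∃ u : R, IsUnit u ∧ b q * b q' = ρ u * b (q * q'))
    (hcross₂ : ∀ (q : Q) (r : R), ∃ r' : R, b q * ρ r = ρ r' * b q)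
    (hR : ∀ (n : ℕ) (N : Submodule R (Fin n → R)), N.FG → Module.FinitePresentation R ↥N) :
    ∀ (n : ℕ) (L : Submodule S (Fin n → S)), L.FG → Module.FinitePresentation S ↥L :=
  stmt9_general ρ b hbasis hR
end

section
/- Let x : V → ℝ be a function on a rational vector space V ⊆ ℝ-vector space H that is homogeneous (x(nφ) = |n| x(φ) for all integers n) and subadditive (x(φ₁+φ₂) ≤ x(φ₁)+x(φ₂)) on an abelian group Λ ⊆ V spanning V, with x ≥ 0. Then x extends uniquely to a continuous seminorm on the real vector space V ⊗ ℝ. -/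
/-!
Clearing denominators, `x` extends to `ℚⁿ` by `q ↦ x (m • q) / |m|` for any `m ≠ 0` with
`m • q ∈ ℤⁿ`; homogeneity makes this independent of `m`, and the extension is a `ℚ`-seminorm.
A seminorm `p` on `ℚⁿ` is Lipschitz for the sup norm with constant `∑ i, p eᵢ`, so it extends by
continuity to `ℝⁿ`, and the seminorm axioms pass to the limit by density of `ℚ × ℚⁿ` in `ℝ × ℝⁿ`.
Conversely a seminorm is determined on `ℚⁿ` by its values on `ℤⁿ`, hence a continuous one is
determined everywhere.
-/

variable {ι : Type*}

theorem denseRange_ratCast_pi : DenseRange fun (q : ι → ℚ) i => (q i : ℝ) :=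
  DenseRange.piMap fun _ => Rat.isDenseEmbedding_coe_real.dense

variable [Fintype ι]

theorem exists_intCast_eq_smul (q : ι → ℚ) :
    ∃ m : ℤ, m ≠ 0 ∧ ∃ φ : ι → ℤ, ∀ i, (φ i : ℚ) = m * q i := by
  obtain ⟨⟨m, hm⟩, h⟩ := IsLocalization.exist_integer_multiples_of_finite (nonZeroDivisors ℤ) q
  choose φ hφ using h
  exact ⟨m, nonZeroDivisors.ne_zero hm, φ, fun i => by simpa using hφ i⟩

section RatExtension

variable (x : (ι → ℤ) → ℝ)

noncomputable def ratExtension (q : ι → ℚ) : ℝ :=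
  x (exists_intCast_eq_smul q).choose_spec.2.choose / |((exists_intCast_eq_smul q).choose : ℝ)|

variable {x} (hhom : ∀ (c : ℤ) (φ : ι → ℤ), x (c • φ) = (|c| : ℝ) * x φ)
include hhom

theorem ratExtension_eq {q : ι → ℚ} {m : ℤ} (hm : m ≠ 0) {φ : ι → ℤ}
    (hφ : ∀ i, (φ i : ℚ) = m * q i) : ratExtension x q = x φ / |(m : ℝ)| := by
  have hk := (exists_intCast_eq_smul q).choose_spec.1
  have hψ := (exists_intCast_eq_smul q).choose_spec.2.choose_spec
  set k := (exists_intCast_eq_smul q).choose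
  set ψ := (exists_intCast_eq_smul q).choose_spec.2.choose
  have hkm : k • φ = m • ψ := funext fun i => by
    have : (k * φ i : ℚ) = m * ψ i := by rw [hφ, hψ]; ring
    exact_mod_cast this
  have hx : |(k : ℝ)| * x φ = |(m : ℝ)| * x ψ := by
    simpa only [hhom, Int.cast_abs] using congrArg x hkm
  have hk' : |(k : ℝ)| ≠ 0 := by positivity
  have hm' : |(m : ℝ)| ≠ 0 := by positivity
  rw [ratExtension, div_eq_div_iff hk' hm']
  linarith

theorem ratExtension_intCast (φ : ι → ℤ) : ratExtension x (fun i => (φ i : ℚ)) = x φ := by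
  simp [ratExtension_eq hhom one_ne_zero (φ := φ) (fun i => (one_mul _).symm)]

theorem ratExtension_smul (c : ℚ) (q : ι → ℚ) :
    ratExtension x (c • q) = ‖c‖ * ratExtension x q := by
  obtain ⟨m, hm, φ, hφ⟩ := exists_intCast_eq_smul q
  have hcm : (c.den * m : ℤ) ≠ 0 := mul_ne_zero (by exact_mod_cast c.den_nz) hm
  have hcφ : ∀ i, ((c.num • φ) i : ℚ) = (c.den * m : ℤ) * (c • q) i := fun i => by
    simp only [Pi.smul_apply, smul_eq_mul]
    push_cast
    rw [hφ, ← Rat.mul_den_eq_num]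
    ring
  rw [ratExtension_eq hhom hcm hcφ, ratExtension_eq hhom hm hφ, hhom, ← Rat.norm_cast_real,
    Real.norm_eq_abs, Rat.cast_def]
  push_cast
  rw [abs_mul, abs_div, Nat.abs_cast]
  field_simp

variable (hsub : ∀ φ ψ : ι → ℤ, x (φ + ψ) ≤ x φ + x ψ)
include hsub

theorem ratExtension_add_le (p q : ι → ℚ) :
    ratExtension x (p + q) ≤ ratExtension x p + ratExtension x q := by
  obtain ⟨m, hm, φ, hφ⟩ := exists_intCast_eq_smul p
  obtain ⟨k, hk, ψ, hψ⟩ := exists_intCast_eq_smul q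
  have hmk : m * k ≠ 0 := mul_ne_zero hm hk
  have hsum : ∀ i, ((k • φ + m • ψ) i : ℚ) = (m * k : ℤ) * (p + q) i := fun i => by
    simp only [Pi.add_apply, Pi.smul_apply, smul_eq_mul]
    push_cast
    rw [hφ, hψ]
    ring
  rw [ratExtension_eq hhom hmk hsum, ratExtension_eq hhom hm hφ, ratExtension_eq hhom hk hψ]
  have hm' : 0 < |(m : ℝ)| := by positivity
  have hk' : 0 < |(k : ℝ)| := by positivity
  calc x (k • φ + m • ψ) / |((m * k : ℤ) : ℝ)|
      ≤ (|(k : ℝ)| * x φ + |(m : ℝ)| * x ψ) / (|(m : ℝ)| * |(k : ℝ)|) := by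
        push_cast
        rw [abs_mul]
        gcongr
        simpa only [hhom, Int.cast_abs] using hsub (k • φ) (m • ψ)
    _ = x φ / |(m : ℝ)| + x ψ / |(k : ℝ)| := by field_simp

noncomputable def ratSeminorm : Seminorm ℚ (ι → ℚ) :=
  Seminorm.of (ratExtension x) (ratExtension_add_le hhom hsub) (ratExtension_smul hhom)

end RatExtension

theorem Seminorm.le_sum_single_mul_norm {𝕜 : Type*} [NormedField 𝕜] [DecidableEq ι]
    (p : Seminorm 𝕜 (ι → 𝕜)) (v : ι → 𝕜) : p v ≤ (∑ i, p (Pi.single i 1)) * ‖v‖ := by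
  calc p v = p (∑ i, Pi.single i (v i)) := by rw [Finset.univ_sum_single]
    _ ≤ ∑ i, p (Pi.single i (v i)) :=
        Finset.le_sum_of_subadditive p (map_zero p).le (map_add_le_add p) _ _
    _ = ∑ i, ‖v i‖ * p (Pi.single i 1) := by
        simp only [← map_smul_eq_mul, ← Pi.single_smul', smul_eq_mul, mul_one]
    _ ≤ (∑ i, p (Pi.single i 1)) * ‖v‖ := by
        rw [Finset.sum_mul]
        refine Finset.sum_le_sum fun i _ => ?_
        rw [mul_comm]
        gcongr
        exact norm_le_pi_norm v i

theorem Seminorm.lipschitzWith_pi {𝕜 : Type*} [NormedField 𝕜] [DecidableEq ι]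
    (p : Seminorm 𝕜 (ι → 𝕜)) : LipschitzWith (∑ i, p (Pi.single i 1)).toNNReal p :=
  LipschitzWith.of_dist_le' fun u v => by
    rw [dist_eq_norm, dist_eq_norm]
    exact (p.norm_sub_map_le_sub u v).trans (p.le_sum_single_mul_norm _)

theorem isUniformInducing_ratCast_pi : IsUniformInducing fun (q : ι → ℚ) i => (q i : ℝ) :=
  (Isometry.piMap _ fun _ => Isometry.of_dist_eq Rat.dist_cast).isUniformInducing

theorem Seminorm.exists_continuous_extension_ratCast (p : Seminorm ℚ (ι → ℚ)) :
    ∃ P : Seminorm ℝ (ι → ℝ), Continuous P ∧ ∀ q : ι → ℚ, P (fun i => (q i : ℝ)) = p q := by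
  classical
  set c : (ι → ℚ) → ι → ℝ := fun q i => q i
  have hc : IsUniformInducing c := isUniformInducing_ratCast_pi
  have hdense : DenseRange c := denseRange_ratCast_pi
  have hp : UniformContinuous p := p.lipschitzWith_pi.uniformContinuous
  set F := (hc.isDenseInducing hdense).extend p
  have hFc : Continuous F := (uniformContinuous_uniformly_extend hc hdense hp).continuous
  have hF : ∀ q, F (c q) = p q := uniformly_extend_of_ind hc hdense hp
  have hF_add : ∀ u v, F (u + v) ≤ F u + F v := by
    refine isClosed_property2 hdense (isClosed_le (by fun_prop) (by fun_prop)) fun q q' => ?_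
    have hc_add : c q + c q' = c (q + q') := funext fun i => by simp [c]
    rw [hc_add, hF, hF, hF]
    exact map_add_le_add p q q'
  have hF_smul : ∀ (a : ℝ) v, F (a • v) = ‖a‖ * F v := by
    suffices ∀ z : ℝ × (ι → ℝ), F (z.1 • z.2) = ‖z.1‖ * F z.2 from fun a v => this (a, v)
    refine isClosed_property (Rat.denseRange_cast.prodMap hdense)
      (isClosed_eq (by fun_prop) (by fun_prop)) fun ⟨r, q⟩ => ?_
    have hc_smul : (r : ℝ) • c q = c (r • q) := funext fun i => by simp [c]
    simp only [Prod.map_apply]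
    rw [hc_smul, hF, hF, map_smul_eq_mul, Rat.norm_cast_real]
  exact ⟨Seminorm.of F hF_add hF_smul, hFc, hF⟩

theorem Seminorm.eq_of_continuous_of_forall_intCast {N N' : Seminorm ℝ (ι → ℝ)}
    (hN : Continuous N) (hN' : Continuous N')
    (h : ∀ φ : ι → ℤ, N (fun i => (φ i : ℝ)) = N' (fun i => (φ i : ℝ))) : N = N' := by
  have hrat : ∀ q : ι → ℚ, N (fun i => (q i : ℝ)) = N' (fun i => (q i : ℝ)) := by
    intro q
    obtain ⟨m, hm, φ, hφ⟩ := exists_intCast_eq_smul q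
    have hcast : (fun i => (φ i : ℝ)) = (m : ℝ) • fun i => (q i : ℝ) := funext fun i => by
      simpa using congrArg (Rat.cast : ℚ → ℝ) (hφ i)
    have hNφ := h φ
    rw [hcast, map_smul_eq_mul, map_smul_eq_mul] at hNφ
    exact mul_left_cancel₀ (by simpa using hm) hNφ
  exact DFunLike.coe_injective (denseRange_ratCast_pi.equalizer hN hN' (funext hrat))

theorem stmt19_general (n : ℕ) (x : (Fin n → ℤ) → ℝ)
    (hhom : ∀ (c : ℤ) (φ : Fin n → ℤ), x (c • φ) = (|c| : ℝ) * x φ)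
    (hsub : ∀ φ ψ : Fin n → ℤ, x (φ + ψ) ≤ x φ + x ψ) :
    ∃! N : Seminorm ℝ (Fin n → ℝ),
      Continuous (N : (Fin n → ℝ) → ℝ) ∧
        ∀ φ : Fin n → ℤ, N (fun i => (φ i : ℝ)) = x φ := by
  obtain ⟨P, hPc, hP⟩ := (ratSeminorm hhom hsub).exists_continuous_extension_ratCast
  have hPx : ∀ φ : Fin n → ℤ, P (fun i => (φ i : ℝ)) = x φ := fun φ => by
    have hPφ := hP fun i => (φ i : ℚ)
    simp only [Rat.cast_intCast] at hPφ
    exact hPφ.trans (ratExtension_intCast hhom φ)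
  exact ⟨P, ⟨hPc, hPx⟩, fun N ⟨hNc, hN⟩ =>
    Seminorm.eq_of_continuous_of_forall_intCast hNc hPc fun φ => (hN φ).trans (hPx φ).symm⟩

/-- Thurston's extension argument: a non-negative, `ℤ`-homogeneous, subadditive function on the
lattice `ℤⁿ ⊆ ℝⁿ` extends uniquely to a continuous seminorm on `ℝⁿ`. -/
theorem stmt19 (n : ℕ) (x : (Fin n → ℤ) → ℝ)
    (hnn : ∀ φ, 0 ≤ x φ)
    (hhom : ∀ (c : ℤ) (φ : Fin n → ℤ), x (c • φ) = (|c| : ℝ) * x φ)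
    (hsub : ∀ φ ψ : Fin n → ℤ, x (φ + ψ) ≤ x φ + x ψ) :
    ∃! N : Seminorm ℝ (Fin n → ℝ),
      Continuous (N : (Fin n → ℝ) → ℝ) ∧
        ∀ φ : Fin n → ℤ, N (fun i => (φ i : ℝ)) = x φ :=
  stmt19_general n x hhom hsub
end
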